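/- arXiv:1002.3841 — 2 statements merged into one kernel-verified Lean document; each statement's English description precedes it below -/
import Mathlib

section
/- Let D₁, …, D_d be derivations of a commutative algebra A (e.g. C^∞(M)), and set L = −(D₁² + … + D_d²). Then for any natural number k and any f, g ∈ A, the element L^k(f g) can be written as a sum of at most (4d)^k terms, each of the form ±(D_{i₁}⋯D_{i_m} f)(D_{j₁}⋯D_{j_{2k−m}} g) with 0 ≤ m ≤ 2k and indices in {1,…,d}. -/
/-!
Each application of `L = -∑ⱼ Dⱼ²` to a product `u v` is expanded by the second-order Leibniz
rule `Dⱼ²(u v) = u Dⱼ²v + 2 Dⱼu Dⱼv + Dⱼ²u v`, i.e. into `4` signed products for each `j`.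
Iterating from `f g`, every term of `L^k(f g)` is a signed product of two words of derivations
applied to `f` and `g`, with total length growing by `2` per step and `4d` children per term.
-/

/-- Apply a word of derivations `D_{i₁} ⋯ D_{i_m}` to an element. -/
def applyWord {A : Type*} [CommRing A] {d : ℕ}
    (D : Fin d → Module.End ℤ A) (w : List (Fin d)) (f : A) : A :=
  w.foldr (fun i x => D i x) f

theorem map_map_mul_of_leibniz {A : Type*} [CommRing A] (D : Module.End ℤ A)
    (hD : ∀ f g : A, D (f * g) = f * D g + g * D f) (u v : A) :
    D (D (u * v)) = u * D (D v) + D u * D v + D u * D v + D (D u) * v := by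
  rw [hD, map_add, hD, hD]
  ring

namespace LeibnizExpansion

variable {A : Type*} [CommRing A] {d : ℕ}

/-- A signed pair of words `(u, v, s)`, read as `±(D^u f)(D^v g)` with `+` for `s = true`. -/
abbrev Term (d : ℕ) := List (Fin d) × List (Fin d) × Bool

def laplacian (D : Fin d → Module.End ℤ A) : Module.End ℤ A := -∑ j, D j * D j

theorem laplacian_apply (D : Fin d → Module.End ℤ A) (x : A) :
    laplacian D x = -∑ j, D j (D j x) := by
  simp [laplacian, LinearMap.sum_apply]

def eval (D : Fin d → Module.End ℤ A) (f g : A) (p : Term d) : A :=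
  (if p.2.2 then (1 : ℤ) else -1) • (applyWord D p.1 f * applyWord D p.2.1 g)

def children (p : Term d) : Multiset (Term d) :=
  (Finset.univ.val : Multiset (Fin d)).bind fun j =>
    {(p.1, j :: j :: p.2.1, !p.2.2), (j :: p.1, j :: p.2.1, !p.2.2),
      (j :: p.1, j :: p.2.1, !p.2.2), (j :: j :: p.1, p.2.1, !p.2.2)}

theorem card_children (p : Term d) : Multiset.card (children p) = 4 * d := by
  simp [children]
  ring

theorem length_of_mem_children {p q : Term d} (hq : q ∈ children p) :
    q.1.length + q.2.1.length = p.1.length + p.2.1.length + 2 := by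
  obtain ⟨j, -, hj⟩ := Multiset.mem_bind.1 hq
  simp only [Multiset.insert_eq_cons, Multiset.mem_cons, Multiset.mem_singleton] at hj
  rcases hj with rfl | rfl | rfl | rfl <;> simp only [List.length_cons] <;> omega

theorem laplacian_eval (D : Fin d → Module.End ℤ A)
    (hder : ∀ j : Fin d, ∀ f g : A, D j (f * g) = f * D j g + g * D j f) (f g : A) (p : Term d) :
    laplacian D (eval D f g p) = ((children p).map (eval D f g)).sum := by
  obtain ⟨u, v, s⟩ := p
  simp only [children, Multiset.map_bind, Multiset.sum_bind, ← Finset.sum_eq_multiset_sum,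
    laplacian_apply, ← Finset.sum_neg_distrib]
  refine Finset.sum_congr rfl fun j _ => ?_
  cases s <;>
    simp [eval, applyWord, map_map_mul_of_leibniz (D j) (hder j)] <;> ring

def expansion (d : ℕ) : ℕ → Multiset (Term d)
  | 0 => {([], [], true)}
  | k + 1 => (expansion d k).bind children

theorem card_expansion (k : ℕ) : Multiset.card (expansion d k) = (4 * d) ^ k := by
  induction k with
  | zero => rfl
  | succ k ih => simp [expansion, Multiset.card_bind, card_children, Multiset.map_const', ih,
      pow_succ]

theorem length_of_mem_expansion {k : ℕ} {p : Term d} (hp : p ∈ expansion d k) :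
    p.1.length + p.2.1.length = 2 * k := by
  induction k generalizing p with
  | zero => simp_all [expansion]
  | succ k ih =>
    obtain ⟨q, hq, hpq⟩ := Multiset.mem_bind.1 hp
    rw [length_of_mem_children hpq, ih hq]
    ring

theorem laplacian_iterate_mul (D : Fin d → Module.End ℤ A)
    (hder : ∀ j : Fin d, ∀ f g : A, D j (f * g) = f * D j g + g * D j f) (f g : A) (k : ℕ) :
    (laplacian D)^[k] (f * g) = ((expansion d k).map (eval D f g)).sum := by
  induction k with
  | zero => simp [expansion, eval, applyWord]
  | succ k ih =>
    rw [Function.iterate_succ_apply', ih, map_multiset_sum, Multiset.map_map, expansion,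
      Multiset.map_bind, Multiset.sum_bind]
    exact congrArg Multiset.sum (Multiset.map_congr rfl fun p _ => laplacian_eval D hder f g p)

end LeibnizExpansion

open LeibnizExpansion in
/-- Leibniz-type expansion for powers of `L = −∑ⱼ Dⱼ²`: for derivations
`D₁, …, D_d` of a commutative algebra `A`, the element `L^k(fg)` is a sum of at
most `(4d)^k` signed terms of the form `±(D_{i₁}⋯D_{i_m} f)(D_{j₁}⋯D_{j_{2k−m}} g)`
with `0 ≤ m ≤ 2k`. -/
theorem stmt9 {A : Type*} [CommRing A] {d : ℕ}
    (D : Fin d → Module.End ℤ A)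
    (hder : ∀ j : Fin d, ∀ f g : A, D j (f * g) = f * D j g + g * D j f)
    (L : A → A) (hL : ∀ f : A, L f = -(∑ j : Fin d, D j (D j f)))
    (k : ℕ) (f g : A) :
    ∃ S : Multiset (List (Fin d) × List (Fin d) × Bool),
      Multiset.card S ≤ (4 * d) ^ k ∧
      (∀ p ∈ S, p.1.length + p.2.1.length = 2 * k) ∧
      L^[k] (f * g) =
        (S.map (fun p =>
          (if p.2.2 then (1 : ℤ) else -1) •
            (applyWord D p.1 f * applyWord D p.2.1 g))).sum := by
  obtain rfl : L = laplacian D := funext fun x => (hL x).trans (laplacian_apply D x).symm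
  exact ⟨expansion d k, (card_expansion k).le, fun _ => length_of_mem_expansion,
    laplacian_iterate_mul D hder f g k⟩
end

section
/- In the setting of the previous statement, suppose additionally that f belongs to the span E_ω(L) of eigenvectors of L with eigenvalue ≤ ω. Then for every m ∈ ℕ and every multi-index (i₁,…,i_m) with entries in {1,…,d}, ‖D_{i₁}⋯D_{i_m} f‖ ≤ ω^{m/2} ‖f‖. -/
/-!
Skewness of the `Dⱼ` gives `⟪x, L x⟫ = ∑ⱼ ‖Dⱼ x‖²`, so `L` is symmetric and each `‖Dⱼ x‖²` is
bounded by `re ⟪x, L x⟫`. Eigenspaces of a symmetric operator are orthogonal, hence on the sum of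
the eigenspaces with eigenvalue `≤ ω` this quadratic form is at most `ω ‖x‖²`, giving
`‖Dⱼ x‖ ≤ √ω ‖x‖` there. Since each `Dⱼ` commutes with `L`, it preserves every eigenspace, so the
bound can be iterated along the multi-index.
-/

open scoped InnerProductSpace
open Module End Set

section SkewFamily

variable {𝕜 E ι : Type*} [RCLike 𝕜] [NormedAddCommGroup E] [InnerProductSpace 𝕜 E] [Fintype ι]
  {D : ι → E →ₗ[𝕜] E}

theorem inner_neg_sum_comp_self_right (hD : ∀ j x y, ⟪D j x, y⟫_𝕜 = -⟪x, D j y⟫_𝕜) (x y : E) :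
    ⟪x, (-(∑ j, D j ∘ₗ D j)) y⟫_𝕜 = ∑ j, ⟪D j x, D j y⟫_𝕜 := by
  simp only [LinearMap.neg_apply, LinearMap.sum_apply, LinearMap.comp_apply,
    inner_neg_right, inner_sum, ← Finset.sum_neg_distrib, hD]

theorem isSymmetric_neg_sum_comp_self (hD : ∀ j x y, ⟪D j x, y⟫_𝕜 = -⟪x, D j y⟫_𝕜) :
    (-(∑ j, D j ∘ₗ D j)).IsSymmetric := by
  intro x y
  rw [← inner_conj_symm, inner_neg_sum_comp_self_right hD, inner_neg_sum_comp_self_right hD,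
    map_sum]
  simp only [inner_conj_symm]

theorem norm_sq_le_re_inner_neg_sum_comp_self (hD : ∀ j x y, ⟪D j x, y⟫_𝕜 = -⟪x, D j y⟫_𝕜)
    (j : ι) (x : E) : ‖D j x‖ ^ 2 ≤ RCLike.re ⟪x, (-(∑ j, D j ∘ₗ D j)) x⟫_𝕜 := by
  rw [inner_neg_sum_comp_self_right hD, map_sum]
  simp only [inner_self_eq_norm_sq]
  exact Finset.single_le_sum (f := fun k => ‖D k x‖ ^ 2) (fun k _ => sq_nonneg _)
    (Finset.mem_univ j)

end SkewFamily

theorem LinearMap.IsSymmetric.re_inner_apply_le_of_mem_iSup_eigenspace {𝕜 E : Type*} [RCLike 𝕜]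
    [NormedAddCommGroup E] [InnerProductSpace 𝕜 E] {T : E →ₗ[𝕜] E} (hT : T.IsSymmetric)
    {ω : ℝ} {x : E} (hx : x ∈ ⨆ r : Iic ω, eigenspace T ((r : ℝ) : 𝕜)) :
    RCLike.re ⟪x, T x⟫_𝕜 ≤ ω * ‖x‖ ^ 2 := by
  have horth : OrthogonalFamily 𝕜 (fun r : Iic ω => eigenspace T ((r : ℝ) : 𝕜))
      fun r => (eigenspace T ((r : ℝ) : 𝕜)).subtypeₗᵢ :=
    hT.orthogonalFamily_eigenspaces.comp (RCLike.ofReal_injective.comp Subtype.coe_injective)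
  -- Split `x` into eigencomponents; orthogonality diagonalises both `⟪x, T x⟫` and `‖x‖²`.
  obtain ⟨v, hv, rfl⟩ := (Submodule.mem_iSup_iff_exists_finsupp _ x).mp hx
  let l : ∀ r : Iic ω, eigenspace T ((r : ℝ) : 𝕜) := fun r => ⟨v r, hv r⟩
  have hTl : ∀ r, T (v r) = ((r : ℝ) : 𝕜) • v r := fun r => mem_eigenspace_iff.mp (hv r)
  have hsum : v.sum (fun _ y => y) = ∑ r ∈ v.support, (eigenspace T _).subtypeₗᵢ (l r) := rfl
  have hTsum : T (v.sum fun _ y => y) =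
      ∑ r ∈ v.support, (eigenspace T _).subtypeₗᵢ (((r : ℝ) : 𝕜) • l r) := by
    simp [Finsupp.sum, hTl, l]
  rw [hTsum, hsum, horth.inner_sum, horth.norm_sum, Finset.mul_sum, map_sum]
  refine Finset.sum_le_sum fun r _ => ?_
  rw [inner_smul_right, inner_self_eq_norm_sq_to_K, ← RCLike.ofReal_pow, ← RCLike.ofReal_mul,
    RCLike.ofReal_re]
  exact mul_le_mul_of_nonneg_right r.2 (sq_nonneg _)

theorem Module.End.mapsTo_iSup_eigenspace_of_comm {R M ι : Type*} [CommRing R] [AddCommGroup M]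
    [Module R M] {f g : End R M} (h : Commute f g) (μ : ι → R) :
    MapsTo g (⨆ i, eigenspace f (μ i) : Submodule R M)
      (⨆ i, eigenspace f (μ i) : Submodule R M) := by
  intro x hx
  refine Submodule.iSup_induction _ (motive := fun y => g y ∈ ⨆ i, eigenspace f (μ i)) hx
    (fun i y hy => Submodule.mem_iSup_of_mem i (mapsTo_genEigenspace_of_comm h (μ i) 1 hy))
    (by simp) (fun y z hy hz => by simpa using add_mem hy hz)

theorem norm_foldr_le_pow_mul_norm {E ι : Type*} [SeminormedAddCommGroup E] {D : ι → E → E}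
    {S : Set E} {c : ℝ} (hc : 0 ≤ c) (hS : ∀ j, MapsTo (D j) S S)
    (hD : ∀ j, ∀ x ∈ S, ‖D j x‖ ≤ c * ‖x‖) (l : List ι) {x : E} (hx : x ∈ S) :
    l.foldr D x ∈ S ∧ ‖l.foldr D x‖ ≤ c ^ l.length * ‖x‖ := by
  induction l with
  | nil => simpa using hx
  | cons j l ih =>
    refine ⟨hS j ih.1, ?_⟩
    calc ‖D j (l.foldr D x)‖ ≤ c * ‖l.foldr D x‖ := hD j _ ih.1
      _ ≤ c * (c ^ l.length * ‖x‖) := mul_le_mul_of_nonneg_left ih.2 hc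
      _ = c ^ (j :: l).length * ‖x‖ := by rw [List.length_cons, pow_succ]; ring

theorem stmt11_general {H : Type*} [NormedAddCommGroup H] [InnerProductSpace ℂ H]
    {d : ℕ} (D : Fin d → H →ₗ[ℂ] H)
    (hskew : ∀ j : Fin d, ∀ x y : H, ⟪D j x, y⟫_ℂ = -⟪x, D j y⟫_ℂ)
    (L : H →ₗ[ℂ] H) (hL : L = -(∑ j : Fin d, D j ∘ₗ D j))
    (hcomm : ∀ j : Fin d, L ∘ₗ D j = D j ∘ₗ L)
    (u : ℕ → H) (lam : ℕ → ℝ)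
    (heig : ∀ m, L (u m) = (lam m : ℂ) • u m)
    (ω : ℝ) (hω : 0 ≤ ω) (f : H)
    (hf : f ∈ Submodule.span ℂ {x : H | ∃ m, lam m ≤ ω ∧ x = u m}) :
    ∀ (m : ℕ) (i : Fin m → Fin d),
      ‖(List.ofFn i).foldr (fun j x => D j x) f‖ ≤ ω ^ ((m : ℝ) / 2) * ‖f‖ := by
  set W : Submodule ℂ H := ⨆ r : Iic ω, eigenspace L ((r : ℝ) : ℂ)
  have hfW : f ∈ W := Submodule.span_le.mpr (by
    rintro _ ⟨m, hm, rfl⟩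
    exact Submodule.mem_iSup_of_mem ⟨lam m, hm⟩ (mem_eigenspace_iff.mpr (heig m))) hf
  have hstep : ∀ j, ∀ x ∈ W, ‖D j x‖ ≤ √ω * ‖x‖ := by
    intro j x hx
    subst hL
    refine (pow_le_pow_iff_left₀ (norm_nonneg _) (by positivity) two_ne_zero).mp ?_
    calc ‖D j x‖ ^ 2 ≤ RCLike.re ⟪x, (-(∑ j, D j ∘ₗ D j)) x⟫_ℂ :=
          norm_sq_le_re_inner_neg_sum_comp_self hskew j x
      _ ≤ ω * ‖x‖ ^ 2 :=
          (isSymmetric_neg_sum_comp_self hskew).re_inner_apply_le_of_mem_iSup_eigenspace hx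
      _ = (√ω * ‖x‖) ^ 2 := by rw [mul_pow, Real.sq_sqrt hω]
  intro m i
  have hpow : √ω ^ m = ω ^ ((m : ℝ) / 2) := by
    rw [Real.sqrt_eq_rpow, ← Real.rpow_mul_natCast hω]
    ring_nf
  simpa [hpow] using (norm_foldr_le_pow_mul_norm (Real.sqrt_nonneg ω)
    (fun j => mapsTo_iSup_eigenspace_of_comm (hcomm j) _) hstep (List.ofFn i) hfW).2

/-- If moreover `f` belongs to the span `E_ω(L)` of eigenvectors of `L = −∑ⱼ Dⱼ²`
with eigenvalue `≤ ω`, then `‖D_{i₁}⋯D_{i_m} f‖ ≤ ω^{m/2} ‖f‖` for every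
multi-index with entries in `{1,…,d}`. -/
theorem stmt11 {H : Type*} [NormedAddCommGroup H] [InnerProductSpace ℂ H] [CompleteSpace H]
    {d : ℕ} (D : Fin d → H →ₗ[ℂ] H)
    (hskew : ∀ j : Fin d, ∀ x y : H, ⟪D j x, y⟫_ℂ = -⟪x, D j y⟫_ℂ)
    (L : H →ₗ[ℂ] H) (hL : L = -(∑ j : Fin d, D j ∘ₗ D j))
    (hcomm : ∀ j : Fin d, L ∘ₗ D j = D j ∘ₗ L)
    (u : ℕ → H) (lam : ℕ → ℝ) (hlamnn : ∀ m, 0 ≤ lam m)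
    (heig : ∀ m, L (u m) = (lam m : ℂ) • u m)
    (ω : ℝ) (hω : 0 ≤ ω) (f : H)
    (hf : f ∈ Submodule.span ℂ {x : H | ∃ m, lam m ≤ ω ∧ x = u m}) :
    ∀ (m : ℕ) (i : Fin m → Fin d),
      ‖(List.ofFn i).foldr (fun j x => D j x) f‖ ≤ ω ^ ((m : ℝ) / 2) * ‖f‖ :=
  stmt11_general D hskew L hL hcomm u lam heig ω hω f hf
end
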